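/- arXiv:1007.2895 — 3 statements merged into one kernel-verified Lean document; each statement's English description precedes it below -/
import Mathlib

section
/- With the setup of the multi-index recursion M^{(d)}_β = ∑_{γ+δ=β, γ,δ≠0} M^{(d)}_γ M^{(d)}_δ (for |β|>1) with prescribed values at unit vectors, one has the closed form M^{(d)}_β = (1/|β|) · binomial(2|β|−2, |β|−1) · (|β|!/β!) · ∏_i (M^{(d)}_{ε_i})^{β_i}. -/
open Finset

section Aux

variable {ι : Type*} [Fintype ι] [DecidableEq ι]

private lemma stmt9_vand (β : ι →₀ ℕ) (k : ℕ) :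
    ∑ γ ∈ Finset.finsuppAntidiag (univ : Finset ι) k, ∏ i, (β i).choose (γ i)
      = (∑ i, β i).choose k := by
  have h := PowerSeries.coeff_prod
    (fun i => (((1 + Polynomial.X : Polynomial ℕ) : PowerSeries ℕ)) ^ (β i)) k (univ : Finset ι)
  have hc : ∀ n j : ℕ,
      (PowerSeries.coeff (R := ℕ) j) ((((1 + Polynomial.X : Polynomial ℕ) : PowerSeries ℕ)) ^ n)
        = n.choose j := by
    intro n j
    rw [← Polynomial.coe_pow, Polynomial.coeff_coe, Polynomial.coeff_one_add_X_pow, Nat.cast_id]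
  have hl : (∏ i : ι, (((1 + Polynomial.X : Polynomial ℕ) : PowerSeries ℕ)) ^ (β i))
      = (((1 + Polynomial.X : Polynomial ℕ) : PowerSeries ℕ)) ^ (∑ i, β i) :=
    Finset.prod_pow_eq_pow_sum _ _ _
  simp only [hl, hc] at h
  exact h.symm

private lemma stmt9_perterm (β γ : ι →₀ ℕ) (hle : γ ≤ β) :
    Nat.multinomial univ ⇑γ * Nat.multinomial univ ⇑(β - γ) * (∑ i, β i).choose (∑ i, γ i)
      = Nat.multinomial univ ⇑β * ∏ i, (β i).choose (γ i) := by
  have hle' : ∀ i, γ i ≤ β i := fun i => hle i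
  have hNle : (∑ i, γ i) ≤ ∑ i, β i := Finset.sum_le_sum fun i _ => hle' i
  have hsub : (∑ i, (β - γ) i) = (∑ i, β i) - ∑ i, γ i := by
    simp only [Finsupp.tsub_apply]
    exact Finset.sum_tsub_distrib univ fun i _ => hle' i
  have hP : 0 < (∏ i, (γ i).factorial) * ∏ i, ((β - γ) i).factorial :=
    Nat.mul_pos (Finset.prod_pos fun i _ => Nat.factorial_pos _)
      (Finset.prod_pos fun i _ => Nat.factorial_pos _)
  apply Nat.eq_of_mul_eq_mul_right hP
  have s1 := Nat.multinomial_spec (univ : Finset ι) ⇑γ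
  have s2 := Nat.multinomial_spec (univ : Finset ι) ⇑(β - γ)
  have s3 := Nat.multinomial_spec (univ : Finset ι) ⇑β
  calc Nat.multinomial univ ⇑γ * Nat.multinomial univ ⇑(β - γ) * (∑ i, β i).choose (∑ i, γ i)
        * ((∏ i, (γ i).factorial) * ∏ i, ((β - γ) i).factorial)
      = (∑ i, β i).choose (∑ i, γ i) * (((∏ i, (γ i).factorial) * Nat.multinomial univ ⇑γ)
          * ((∏ i, ((β - γ) i).factorial) * Nat.multinomial univ ⇑(β - γ))) := by ring
    _ = (∑ i, β i).choose (∑ i, γ i) * (∑ i, γ i).factorial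
        * ((∑ i, β i) - ∑ i, γ i).factorial := by rw [s1, s2, hsub]; ring
    _ = (∑ i, β i).factorial := Nat.choose_mul_factorial_mul_factorial hNle
    _ = (∏ i, (β i).factorial) * Nat.multinomial univ ⇑β := s3.symm
    _ = (∏ i, ((β i).choose (γ i) * (γ i).factorial * ((β - γ) i).factorial))
        * Nat.multinomial univ ⇑β := by
          congr 1
          apply Finset.prod_congr rfl
          intro i _
          rw [Finsupp.tsub_apply]
          exact (Nat.choose_mul_factorial_mul_factorial (hle' i)).symm
    _ = Nat.multinomial univ ⇑β * (∏ i, (β i).choose (γ i))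
        * ((∏ i, (γ i).factorial) * ∏ i, ((β - γ) i).factorial) := by
          simp only [Finset.prod_mul_distrib]; ring

private lemma stmt9_Nlt {γ β : ι →₀ ℕ} (h : γ < β) : (∑ i, γ i) < ∑ i, β i := by
  obtain ⟨hle, hne⟩ := lt_iff_le_and_ne.mp h
  have hle' : ∀ i, γ i ≤ β i := fun i => hle i
  have : ∃ i, γ i < β i := by
    by_contra hc
    push_neg at hc
    exact hne (Finsupp.ext fun i => le_antisymm (hle' i) (hc i))
  obtain ⟨i, hi⟩ := this
  exact Finset.sum_lt_sum (fun j _ => hle' j) ⟨i, Finset.mem_univ i, hi⟩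

private lemma stmt9_Npos {γ : ι →₀ ℕ} (h : γ ≠ 0) : 0 < ∑ i, γ i := by
  rcases Finsupp.ne_iff.mp h with ⟨i, hi⟩
  simp only [Finsupp.coe_zero, Pi.zero_apply] at hi
  exact Finset.sum_pos' (fun j _ => Nat.zero_le _) ⟨i, Finset.mem_univ i, Nat.pos_of_ne_zero hi⟩

private lemma stmt9_setEq (β : ι →₀ ℕ) (k : ℕ) (hk1 : 1 ≤ k) (hk2 : k < ∑ i, β i) :
    (Finset.Ioo (0 : ι →₀ ℕ) β).filter (fun γ => (∑ i, γ i) = k)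
      = (Finset.finsuppAntidiag (univ : Finset ι) k).filter (fun γ => γ ≤ β) := by
  ext γ
  simp only [Finset.mem_filter, Finset.mem_Ioo, Finset.mem_finsuppAntidiag]
  constructor
  · rintro ⟨⟨h0, hb⟩, hs⟩
    exact ⟨⟨hs, Finset.subset_univ _⟩, le_of_lt hb⟩
  · rintro ⟨⟨hs, -⟩, hle⟩
    refine ⟨⟨?_, lt_of_le_of_ne hle ?_⟩, hs⟩
    · rw [pos_iff_ne_zero]
      intro h0
      rw [h0] at hs
      simp at hs
      omega
    · rintro rfl
      rw [hs] at hk2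
      omega

private lemma stmt9_inner (β : ι →₀ ℕ) (k : ℕ) (hk1 : 1 ≤ k) (hk2 : k < ∑ i, β i) :
    ∑ γ ∈ (Finset.Ioo (0 : ι →₀ ℕ) β).filter (fun γ => (∑ i, γ i) = k),
      Nat.multinomial univ ⇑γ * Nat.multinomial univ ⇑(β - γ)
      = Nat.multinomial univ ⇑β := by
  have hCpos : 0 < (∑ i, β i).choose k := Nat.choose_pos (le_of_lt hk2)
  apply Nat.eq_of_mul_eq_mul_right hCpos
  rw [Finset.sum_mul, stmt9_setEq β k hk1 hk2]
  have step : ∀ γ ∈ (Finset.finsuppAntidiag (univ : Finset ι) k).filter (fun γ => γ ≤ β),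
      Nat.multinomial univ ⇑γ * Nat.multinomial univ ⇑(β - γ) * (∑ i, β i).choose k
        = Nat.multinomial univ ⇑β * ∏ i, (β i).choose (γ i) := by
    intro γ hγ
    rw [Finset.mem_filter, Finset.mem_finsuppAntidiag] at hγ
    obtain ⟨⟨hs, -⟩, hle⟩ := hγ
    rw [← hs]
    exact stmt9_perterm β γ hle
  rw [Finset.sum_congr rfl step, ← Finset.mul_sum]
  congr 1
  rw [← stmt9_vand β k]
  apply Finset.sum_subset (Finset.filter_subset _ _)
  intro γ hγ hnγ
  rw [Finset.mem_filter] at hnγ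
  have : ¬ γ ≤ β := fun h => hnγ ⟨hγ, h⟩
  obtain ⟨i, hi⟩ := not_forall.mp (fun h => this fun j => h j)
  push_neg at hi
  exact Finset.prod_eq_zero (Finset.mem_univ i) (Nat.choose_eq_zero_of_lt hi)

private lemma stmt9_catsum (m : ℕ) :
    ∑ k ∈ Finset.Ico 1 (m + 2), catalan (k - 1) * catalan (m + 2 - k - 1) = catalan (m + 1) := by
  rw [Finset.sum_Ico_eq_sum_range]
  rw [catalan_succ]; rw [Fin.sum_univ_eq_sum_range (fun i => catalan i * catalan (m - i))]
  apply Finset.sum_congr (by norm_num)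
  intro j hj
  rw [Finset.mem_range] at hj
  have h1 : 1 + j - 1 = j := by omega
  have h2 : m + 2 - (1 + j) - 1 = m - j := by omega
  rw [h1, h2]

private lemma stmt9_key (β : ι →₀ ℕ) (h2 : 2 ≤ ∑ i, β i) :
    ∑ γ ∈ Finset.Ioo (0 : ι →₀ ℕ) β,
      (catalan ((∑ i, γ i) - 1) * Nat.multinomial univ ⇑γ) *
      (catalan ((∑ i, (β - γ) i) - 1) * Nat.multinomial univ ⇑(β - γ))
      = catalan ((∑ i, β i) - 1) * Nat.multinomial univ ⇑β := by
  have hmap : ∀ γ ∈ Finset.Ioo (0 : ι →₀ ℕ) β, (∑ i, γ i) ∈ Finset.Ico 1 (∑ i, β i) := by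
    intro γ hγ
    rw [Finset.mem_Ioo] at hγ
    rw [Finset.mem_Ico]
    exact ⟨stmt9_Npos (pos_iff_ne_zero.mp hγ.1), stmt9_Nlt hγ.2⟩
  rw [← Finset.sum_fiberwise_of_maps_to hmap]
  have hstep : ∀ k ∈ Finset.Ico 1 (∑ i, β i),
      (∑ γ ∈ (Finset.Ioo (0 : ι →₀ ℕ) β).filter (fun γ => (∑ i, γ i) = k),
        (catalan ((∑ i, γ i) - 1) * Nat.multinomial univ ⇑γ) *
        (catalan ((∑ i, (β - γ) i) - 1) * Nat.multinomial univ ⇑(β - γ)))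
      = catalan (k - 1) * catalan ((∑ i, β i) - k - 1) * Nat.multinomial univ ⇑β := by
    intro k hk
    rw [Finset.mem_Ico] at hk
    have hterm : ∀ γ ∈ (Finset.Ioo (0 : ι →₀ ℕ) β).filter (fun γ => (∑ i, γ i) = k),
        (catalan ((∑ i, γ i) - 1) * Nat.multinomial univ ⇑γ) *
        (catalan ((∑ i, (β - γ) i) - 1) * Nat.multinomial univ ⇑(β - γ))
        = catalan (k - 1) * catalan ((∑ i, β i) - k - 1) *
            (Nat.multinomial univ ⇑γ * Nat.multinomial univ ⇑(β - γ)) := by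
      intro γ hγ
      rw [Finset.mem_filter, Finset.mem_Ioo] at hγ
      obtain ⟨⟨-, hlt⟩, hs⟩ := hγ
      have hsub : (∑ i, (β - γ) i) = (∑ i, β i) - k := by
        simp only [Finsupp.tsub_apply]
        rw [Finset.sum_tsub_distrib univ (fun i _ => le_of_lt hlt i), hs]
      rw [hs, hsub]; ring
    rw [Finset.sum_congr rfl hterm, ← Finset.mul_sum, stmt9_inner β k hk.1 hk.2]
  rw [Finset.sum_congr rfl hstep, ← Finset.sum_mul]
  congr 1
  obtain ⟨m, hm⟩ : ∃ m, (∑ i, β i) = m + 2 := ⟨(∑ i, β i) - 2, by omega⟩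
  rw [hm]
  have : m + 2 - 1 = m + 1 := by omega
  rw [this, stmt9_catsum]

end Aux

/-- Closed form for the d-dimensional recursion:
    M_β = (1/|β|) C(2|β|−2, |β|−1) (|β|!/β!) ∏_i M_{ε_i}^{β_i}. -/
theorem stmt9 (d : ℕ) (hd : 1 ≤ d) (M : (Fin d →₀ ℕ) → ℝ)
    (hpos : ∀ i : Fin d, 0 < M (Finsupp.single i 1))
    (hrec : ∀ β : Fin d →₀ ℕ, 1 < (β.sum fun _ n => n) →
      M β = ∑ γ ∈ Finset.Ioo (0 : Fin d →₀ ℕ) β, M γ * M (β - γ)) :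
    ∀ β : Fin d →₀ ℕ, β ≠ 0 →
      M β = ((1 : ℝ) / (β.sum fun _ n => n)) *
        (Nat.choose (2 * (β.sum fun _ n => n) - 2) ((β.sum fun _ n => n) - 1) : ℝ) *
        (((β.sum fun _ n => n).factorial : ℝ) /
          (β.prod fun _ n => (n.factorial : ℝ))) *
        ∏ i : Fin d, M (Finsupp.single i 1) ^ β i := by
  -- notation
  have hsum : ∀ β : Fin d →₀ ℕ, (β.sum fun _ n => n) = ∑ i, β i := fun β =>
    Finsupp.sum_fintype _ _ (fun _ => rfl)
  set g : (Fin d →₀ ℕ) → ℕ := fun β => catalan ((∑ i, β i) - 1) * Nat.multinomial univ ⇑β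
    with hg
  set P : (Fin d →₀ ℕ) → ℝ := fun β => ∏ i : Fin d, M (Finsupp.single i 1) ^ β i with hP
  -- main induction : M β = g β * P β
  have main : ∀ n : ℕ, ∀ β : Fin d →₀ ℕ, β ≠ 0 → (∑ i, β i) = n → M β = (g β : ℝ) * P β := by
    intro n
    induction n using Nat.strong_induction_on with
    | _ n ih =>
      intro β hβ hn
      have hn1 : 1 ≤ n := hn ▸ stmt9_Npos hβ
      rcases eq_or_lt_of_le hn1 with h1 | h2
      · -- base case : n = 1
        obtain ⟨i, hi⟩ : ∃ i, β = Finsupp.single i 1 := by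
          obtain ⟨i, hi⟩ := Finsupp.ne_iff.mp hβ
          simp only [Finsupp.coe_zero, Pi.zero_apply] at hi
          refine ⟨i, Finsupp.ext fun j => ?_⟩
          have hβi : β i = 1 := by
            have h₁ : β i ≤ ∑ k, β k := Finset.single_le_sum (fun k _ => Nat.zero_le _)
              (Finset.mem_univ i)
            omega
          rcases eq_or_ne j i with rfl | hji
          · simp [hβi]
          · have h₂ : β i + β j ≤ ∑ k, β k := by
              rw [← Finset.add_sum_erase _ _ (Finset.mem_univ i)]
              refine Nat.add_le_add_left ?_ _
              exact Finset.single_le_sum (fun k _ => Nat.zero_le _)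
                (Finset.mem_erase.mpr ⟨hji, Finset.mem_univ j⟩)
            have hj0 : β j = 0 := by omega
            simp [hj0, Finsupp.single_apply, Ne.symm hji]
        subst hi
        have hone : (∑ k, (Finsupp.single i 1 : Fin d →₀ ℕ) k) = 1 := by
          simp [Finsupp.single_apply]
        have hmult : Nat.multinomial univ ⇑(Finsupp.single i 1 : Fin d →₀ ℕ) = 1 := by
          have := Nat.multinomial_spec (univ : Finset (Fin d))
            ⇑(Finsupp.single i 1 : Fin d →₀ ℕ)
          have hfact : (∏ k, ((Finsupp.single i 1 : Fin d →₀ ℕ) k).factorial) = 1 := by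
            apply Finset.prod_eq_one
            intro k _
            rcases eq_or_ne k i with rfl | hk
            · simp
            · simp [Finsupp.single_apply, Ne.symm hk]
          rw [hfact, one_mul, hone] at this
          simpa using this
        have hprod : P (Finsupp.single i 1) = M (Finsupp.single i 1) := by
          show (∏ k : Fin d, M (Finsupp.single k 1) ^ (Finsupp.single i 1 : Fin d →₀ ℕ) k)
            = M (Finsupp.single i 1)
          rw [Finset.prod_eq_single i]
          · simp
          · intro k _ hk
            simp [Finsupp.single_apply, Ne.symm hk]
          · simp
        rw [hg]
        simp only [hone, hmult, hprod]
        norm_num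
      · -- inductive step : 2 ≤ n
        have hrecβ := hrec β (by rw [hsum, hn]; omega)
        rw [hrecβ]
        have hterm : ∀ γ ∈ Finset.Ioo (0 : Fin d →₀ ℕ) β,
            M γ * M (β - γ) = ((g γ * g (β - γ) : ℕ) : ℝ) * P β := by
          intro γ hγ
          rw [Finset.mem_Ioo] at hγ
          have hγ0 : γ ≠ 0 := pos_iff_ne_zero.mp hγ.1
          have hγlt := hγ.2
          have hle : ∀ i, γ i ≤ β i := fun i => (le_of_lt hγlt) i
          have hδ0 : (β - γ) ≠ 0 := by
            intro h0
            have : β = γ := by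
              ext i
              have h0i := DFunLike.congr_fun h0 i
              rw [Finsupp.tsub_apply] at h0i
              simp only [Finsupp.coe_zero, Pi.zero_apply] at h0i
              have h'' := hle i
              omega
            exact absurd this.symm (ne_of_lt hγlt)
          have hNγ : (∑ i, γ i) < n := hn ▸ stmt9_Nlt hγlt
          have hsubsum : (∑ i, (β - γ) i) = n - ∑ i, γ i := by
            simp only [Finsupp.tsub_apply]
            rw [Finset.sum_tsub_distrib univ (fun i _ => hle i), hn]
          have hNδ : (∑ i, (β - γ) i) < n := by
            have := stmt9_Npos hγ0
            omega
          rw [ih _ hNγ γ hγ0 rfl, ih _ hNδ (β - γ) hδ0 rfl]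
          have hPP : P γ * P (β - γ) = P β := by
            rw [hP]
            simp only
            rw [← Finset.prod_mul_distrib]
            apply Finset.prod_congr rfl
            intro i _
            rw [← pow_add]
            congr 1
            rw [Finsupp.tsub_apply]
            have := hle i
            omega
          push_cast
          calc (g γ : ℝ) * P γ * ((g (β - γ) : ℝ) * P (β - γ))
              = (g γ : ℝ) * (g (β - γ) : ℝ) * (P γ * P (β - γ)) := by ring
            _ = (g γ : ℝ) * (g (β - γ) : ℝ) * P β := by rw [hPP]
        rw [Finset.sum_congr rfl hterm, ← Finset.sum_mul, ← Nat.cast_sum]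
        congr 2
        exact stmt9_key β (by omega)
  -- conclusion: convert the closed form
  intro β hβ
  have hn1 : 1 ≤ ∑ i, β i := stmt9_Npos hβ
  obtain ⟨m, hm⟩ : ∃ m, (∑ i, β i) = m + 1 := ⟨(∑ i, β i) - 1, by omega⟩
  have hMβ := main (∑ i, β i) β hβ rfl
  rw [hMβ, hsum, hm]
  have hfactprod : (β.prod fun _ n => (n.factorial : ℝ)) = ((∏ i, (β i).factorial : ℕ) : ℝ) := by
    rw [Finsupp.prod_fintype _ _ (fun _ => by norm_num)]
    push_cast
    rfl
  rw [hfactprod]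
  have hchoose : (2 * (m + 1) - 2).choose (m + 1 - 1) = (m + 1) * catalan m := by
    have h1 : 2 * (m + 1) - 2 = 2 * m := by omega
    have h2 : m + 1 - 1 = m := by omega
    rw [h1, h2, ← Nat.centralBinom, succ_mul_catalan_eq_centralBinom]
  rw [hchoose]
  have hspec := Nat.multinomial_spec (univ : Finset (Fin d)) ⇑β
  have hprodpos : (0 : ℝ) < ((∏ i, (β i).factorial : ℕ) : ℝ) := by
    have : 0 < ∏ i, (β i).factorial := Finset.prod_pos fun i _ => Nat.factorial_pos _
    exact_mod_cast this
  have hspec' : (∏ i, (β i).factorial) * Nat.multinomial univ ⇑β = (m + 1).factorial := by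
    rw [hspec, hm]
  have hmulteq : ((m + 1).factorial : ℝ) / ((∏ i, (β i).factorial : ℕ) : ℝ)
      = (Nat.multinomial univ ⇑β : ℝ) := by
    rw [div_eq_iff (ne_of_gt hprodpos), mul_comm]
    exact_mod_cast hspec'.symm
  rw [hmulteq, hg]
  simp only
  rw [hm]
  have hm1 : m + 1 - 1 = m := by omega
  rw [hm1]
  have hne : ((m : ℝ) + 1) ≠ 0 := by positivity
  push_cast
  rw [hP]
  field_simp
end

section
/- Let q_k > 1 with ∑_k 1/q_k < ∞, let ℓ ≥ 0, and let z = (z_k) be a complex sequence with ∑_k q_k^ℓ |z_k|² < ∞. Then for every 0 ≤ ρ < 1, ∑_α (α!)^ρ q^{ℓα} |z^α|²/α! < ∞, i.e., the stochastic exponential E(z) = ∑_α (z^α/√(α!)) ξ_α lies in the weighted space (S)_{ρ,ℓ}. -/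
open Finsupp

/-- Key combinatorial bound: a finite sum over finsupps supported in `S` of products
is bounded by the product of the full one-variable sums. -/
lemma key_sum_le {f : ℕ → ℕ → ℝ} (hf0 : ∀ k, f k 0 = 1) (hfnn : ∀ k n, 0 ≤ f k n)
    (hfs : ∀ k, Summable (f k)) (S : Finset ℕ) :
    ∀ u : Finset (ℕ →₀ ℕ), (∀ α ∈ u, α.support ⊆ S) →
      ∑ α ∈ u, ∏ k ∈ S, f k (α k) ≤ ∏ k ∈ S, ∑' n, f k n := by
  induction S using Finset.induction_on with
  | empty =>
    intro u hu
    simp only [Finset.prod_empty, Finset.sum_const, nsmul_eq_mul, mul_one]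
    have hsub : u ⊆ {0} := by
      intro α hα
      simp only [Finset.mem_singleton]
      ext k
      have h := hu α hα
      by_contra hk
      exact absurd (h (Finsupp.mem_support_iff.mpr hk)) (Finset.notMem_empty k)
    calc (u.card : ℝ) ≤ ({0} : Finset (ℕ →₀ ℕ)).card := by
          exact_mod_cast Finset.card_le_card hsub
      _ = 1 := by simp
  | @insert a S ha IH =>
    intro u hu
    have hφ : Function.Injective (fun α : ℕ →₀ ℕ => (α a, α.erase a)) := by
      intro α β h
      simp only [Prod.mk.injEq] at h
      ext k
      by_cases hk : k = a
      · subst hk; exact h.1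
      · have := congrArg (fun γ : ℕ →₀ ℕ => γ k) h.2
        simpa [Finsupp.erase_ne hk] using this
    have hstep : ∀ α ∈ u, ∏ k ∈ insert a S, f k (α k)
        = f a (α a) * ∏ k ∈ S, f k ((α.erase a) k) := by
      intro α _
      rw [Finset.prod_insert ha]
      congr 1
      refine Finset.prod_congr rfl fun k hk => ?_
      have hk' : k ≠ a := fun h => ha (h ▸ hk)
      rw [Finsupp.erase_ne hk']
    rw [Finset.sum_congr rfl hstep]
    have himg : ∑ α ∈ u, f a (α a) * ∏ k ∈ S, f k ((α.erase a) k)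
        = ∑ p ∈ u.image (fun α : ℕ →₀ ℕ => (α a, α.erase a)),
            f a p.1 * ∏ k ∈ S, f k (p.2 k) := by
      rw [Finset.sum_image (fun x _ y _ h => hφ h)]
    rw [himg]
    have hsubset : u.image (fun α : ℕ →₀ ℕ => (α a, α.erase a)) ⊆
        (u.image fun α => α a) ×ˢ (u.image (Finsupp.erase a)) := by
      intro p hp
      rcases Finset.mem_image.mp hp with ⟨α, hα, rfl⟩
      exact Finset.mem_product.mpr ⟨Finset.mem_image_of_mem _ hα,
        Finset.mem_image_of_mem _ hα⟩
    have h1 : ∑ p ∈ u.image (fun α : ℕ →₀ ℕ => (α a, α.erase a)),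
          f a p.1 * ∏ k ∈ S, f k (p.2 k)
        ≤ ∑ p ∈ (u.image fun α => α a) ×ˢ (u.image (Finsupp.erase a)),
          f a p.1 * ∏ k ∈ S, f k (p.2 k) := by
      refine Finset.sum_le_sum_of_subset_of_nonneg hsubset fun p _ _ => ?_
      exact mul_nonneg (hfnn a p.1) (Finset.prod_nonneg fun k _ => hfnn k (p.2 k))
    refine h1.trans ?_
    rw [Finset.sum_product, Finset.prod_insert ha]
    have heq := Finset.sum_mul_sum (Finset.image (fun α : ℕ →₀ ℕ => α a) u)
      (Finset.image (Finsupp.erase a) u) (f a) (fun β => ∏ k ∈ S, f k (β k))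
    refine le_trans (le_of_eq heq.symm) ?_
    have h2 : ∑ n ∈ u.image fun α => α a, f a n ≤ ∑' n, f a n :=
      Summable.sum_le_tsum _ (fun n _ => hfnn a n) (hfs a)
    have h3 : ∑ β ∈ u.image (Finsupp.erase a), ∏ k ∈ S, f k (β k)
        ≤ ∏ k ∈ S, ∑' n, f k n := by
      refine IH _ fun β hβ => ?_
      rcases Finset.mem_image.mp hβ with ⟨α, hα, rfl⟩
      intro k hk
      have hk' := Finsupp.support_erase (a := a) (f := α) ▸ hk
      rcases Finset.mem_erase.mp hk' with ⟨hka, hkα⟩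
      rcases Finset.mem_insert.mp (hu α hα hkα) with h | h
      · exact absurd h hka
      · exact h
    refine mul_le_mul h2 h3 (Finset.sum_nonneg fun β _ =>
      Finset.prod_nonneg fun k _ => hfnn k (β k)) ?_
    exact tsum_nonneg fun n => hfnn a n

lemma summable_finsupp_prod {f : ℕ → ℕ → ℝ} (hf0 : ∀ k, f k 0 = 1)
    (hfnn : ∀ k n, 0 ≤ f k n) (hfs : ∀ k, Summable (f k)) {C : ℝ}
    (hC : ∀ S : Finset ℕ, ∏ k ∈ S, ∑' n, f k n ≤ C) :
    Summable (fun α : ℕ →₀ ℕ => α.prod f) := by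
  refine summable_of_sum_le (c := C) (fun α => Finset.prod_nonneg fun k _ => hfnn k (α k))
    (fun u => ?_)
  set S := u.sup Finsupp.support with hS
  have hrw : ∀ α ∈ u, α.prod f = ∏ k ∈ S, f k (α k) := by
    intro α hα
    exact Finsupp.prod_of_support_subset α (Finset.le_sup hα) f fun k _ => hf0 k
  rw [Finset.sum_congr rfl hrw]
  exact (key_sum_le hf0 hfnn hfs S u fun α hα => Finset.le_sup hα).trans (hC S)

/-- The stochastic exponential lies in (S)_{ρ,ℓ} for every 0 ≤ ρ < 1:
    ∑_α (α!)^{ρ-1} q^{ℓα} |z^α|² < ∞ whenever ∑_k q_k^ℓ |z_k|² < ∞. -/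
theorem stmt13 (q : ℕ → ℝ) (hq : ∀ k, 1 < q k)
    (hs : Summable fun k => (q k)⁻¹) (ℓ : ℕ) (z : ℕ → ℂ)
    (hz : Summable fun k => (q k) ^ ℓ * ‖z k‖ ^ 2)
    (ρ : ℝ) (hρ0 : 0 ≤ ρ) (hρ1 : ρ < 1) :
    Summable (fun α : ℕ →₀ ℕ =>
      ((α.prod fun _ n => (n.factorial : ℝ)) ^ (ρ - 1)) *
        (α.prod fun k n => ((q k) ^ ℓ) ^ n) *
        (α.prod fun k n => (‖z k‖ ^ 2) ^ n)) := by
  set x : ℕ → ℝ := fun k => (q k) ^ ℓ * ‖z k‖ ^ 2 with hxdef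
  have hxnn : ∀ k, 0 ≤ x k := fun k =>
    mul_nonneg (pow_nonneg (le_of_lt ((hq k).trans_le' zero_le_one)) _) (sq_nonneg _)
  set f : ℕ → ℕ → ℝ := fun k n => ((n.factorial : ℝ)) ^ (ρ - 1) * x k ^ n with hfdef
  have hρneg : ρ - 1 < 0 := by linarith
  have hfact1 : ∀ n : ℕ, (1 : ℝ) ≤ (n.factorial : ℝ) := fun n => by
    exact_mod_cast Nat.one_le_iff_ne_zero.mpr n.factorial_ne_zero
  have hrpow_le1 : ∀ n : ℕ, ((n.factorial : ℝ)) ^ (ρ - 1) ≤ 1 := fun n =>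
    Real.rpow_le_one_of_one_le_of_nonpos (hfact1 n) hρneg.le
  have hrpow_nn : ∀ n : ℕ, 0 ≤ ((n.factorial : ℝ)) ^ (ρ - 1) := fun n =>
    Real.rpow_nonneg (by positivity) _
  have hf0 : ∀ k, f k 0 = 1 := fun k => by
    simp [hfdef, Real.one_rpow]
  have hfnn : ∀ k n, 0 ≤ f k n := fun k n =>
    mul_nonneg (hrpow_nn n) (pow_nonneg (hxnn k) n)
  -- each one-variable series is summable
  have hfs : ∀ k, Summable (f k) := by
    intro k
    rcases eq_or_lt_of_le (hxnn k) with hx0 | hxpos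
    · refine summable_of_ne_finset_zero (s := {0}) fun n hn => ?_
      have hn0 : n ≠ 0 := by simpa using hn
      simp [hfdef, ← hx0, zero_pow hn0]
    · have hfne : ∀ n, f k n ≠ 0 := fun n =>
        ne_of_gt (mul_pos (Real.rpow_pos_of_pos (by positivity) _) (pow_pos hxpos n))
      refine summable_of_ratio_test_tendsto_lt_one (l := 0) one_pos
        (Filter.Eventually.of_forall hfne) ?_
      have hratio : ∀ n : ℕ, ‖f k (n + 1)‖ / ‖f k n‖ = ((n : ℝ) + 1) ^ (ρ - 1) * x k := by
        intro n
        have h1 : ((n + 1).factorial : ℝ) = ((n : ℝ) + 1) * (n.factorial : ℝ) := by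
          push_cast [Nat.factorial_succ]; ring
        have h2 : (((n + 1).factorial : ℝ)) ^ (ρ - 1)
            = ((n : ℝ) + 1) ^ (ρ - 1) * ((n.factorial : ℝ)) ^ (ρ - 1) := by
          rw [h1, Real.mul_rpow (by positivity) (by positivity)]
        rw [Real.norm_of_nonneg (hfnn k _), Real.norm_of_nonneg (hfnn k _)]
        simp only [hfdef]
        rw [h2, pow_succ]
        have hfkn : ((n.factorial : ℝ)) ^ (ρ - 1) * x k ^ n ≠ 0 :=
          ne_of_gt (mul_pos (Real.rpow_pos_of_pos (by positivity) _) (pow_pos hxpos n))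
        field_simp
      rw [show (0 : ℝ) = 0 * x k by ring]
      refine Filter.Tendsto.congr (fun n => (hratio n).symm) (Filter.Tendsto.mul_const _ ?_)
      have := (tendsto_rpow_neg_atTop (y := 1 - ρ) (by linarith)).comp
        (Filter.tendsto_atTop_add_const_right Filter.atTop (1 : ℝ) tendsto_natCast_atTop_atTop)
      simpa [Function.comp_def, neg_sub] using this
  -- the tails T k - 1 are summable
  set T : ℕ → ℝ := fun k => ∑' n, f k n with hTdef
  have hT1 : ∀ k, 1 ≤ T k := by
    intro k
    have := Summable.le_tsum (hfs k) 0 fun n _ => hfnn k n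
    simpa [hf0 k] using this
  have htail_le : ∀ k, x k ≤ 1 / 2 → T k - 1 ≤ 2 * x k := by
    intro k hk2
    have hxlt1 : x k < 1 := lt_of_le_of_lt hk2 (by norm_num)
    have hT : T k = 1 + ∑' n, f k (n + 1) := by
      rw [hTdef]
      simpa [hf0 k] using Summable.tsum_eq_zero_add (hfs k)
    have hsum1 : Summable fun n => f k (n + 1) := (summable_nat_add_iff 1).mpr (hfs k)
    have hsumg : Summable fun n : ℕ => x k * x k ^ n :=
      (summable_geometric_of_lt_one (hxnn k) hxlt1).mul_left _
    have hle : ∑' n, f k (n + 1) ≤ ∑' n : ℕ, x k * x k ^ n := by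
      refine Summable.tsum_le_tsum (fun n => ?_) hsum1 hsumg
      calc f k (n + 1) ≤ 1 * x k ^ (n + 1) :=
            mul_le_mul_of_nonneg_right (hrpow_le1 _) (pow_nonneg (hxnn k) _)
        _ = x k * x k ^ n := by rw [one_mul, pow_succ]; ring
    have hgeo : ∑' n : ℕ, x k * x k ^ n = x k * (1 - x k)⁻¹ := by
      rw [tsum_mul_left, tsum_geometric_of_lt_one (hxnn k) hxlt1]
    have hinv : (1 - x k)⁻¹ ≤ 2 := by
      rw [inv_le_comm₀ (by linarith) (by norm_num)]
      linarith
    have : x k * (1 - x k)⁻¹ ≤ 2 * x k := by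
      calc x k * (1 - x k)⁻¹ ≤ x k * 2 := mul_le_mul_of_nonneg_left hinv (hxnn k)
        _ = 2 * x k := by ring
    rw [hT]
    linarith [hle.trans (hgeo.le.trans this)]
  have hxto0 : Filter.Tendsto x Filter.atTop (nhds 0) := hz.tendsto_atTop_zero
  obtain ⟨K, hK⟩ : ∃ K, ∀ k ≥ K, x k ≤ 1 / 2 := by
    have := (hxto0.eventually_le_const (by norm_num : (0:ℝ) < 1/2)).exists_forall_of_atTop
    simpa using this
  have hTm1_nn : ∀ k, 0 ≤ T k - 1 := fun k => by linarith [hT1 k]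
  have hTm1_sum : Summable fun k => T k - 1 := by
    rw [← summable_nat_add_iff K]
    refine Summable.of_nonneg_of_le (fun n => hTm1_nn (n + K))
      (fun n => htail_le (n + K) (hK (n + K) (Nat.le_add_left K n))) ?_
    exact (summable_nat_add_iff K).mpr (hz.mul_left 2)
  -- uniform bound on finite products
  set C : ℝ := Real.exp (∑' k, (T k - 1)) with hCdef
  have hC : ∀ S : Finset ℕ, ∏ k ∈ S, T k ≤ C := by
    intro S
    calc ∏ k ∈ S, T k ≤ ∏ k ∈ S, Real.exp (T k - 1) := by
          refine Finset.prod_le_prod (fun k _ => by linarith [hT1 k]) fun k _ => ?_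
          linarith [Real.add_one_le_exp (T k - 1)]
      _ = Real.exp (∑ k ∈ S, (T k - 1)) := (Real.exp_sum S _).symm
      _ ≤ C := Real.exp_le_exp.mpr (Summable.sum_le_tsum S (fun k _ => hTm1_nn k) hTm1_sum)
  have hmain : Summable (fun α : ℕ →₀ ℕ => α.prod f) :=
    summable_finsupp_prod hf0 hfnn hfs hC
  refine hmain.congr fun α => ?_
  unfold Finsupp.prod
  rw [← Real.finset_prod_rpow _ _ (fun k _ => by positivity) _, ← Finset.prod_mul_distrib,
    ← Finset.prod_mul_distrib]
  refine Finset.prod_congr rfl fun k _ => ?_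
  simp only [hfdef, hxdef, mul_pow]
  ring
end

section
/- Suppose (L_α)_{|α|≥1} are nonnegative reals with L_{ε_k} ≤ λ q_k^m and L_α ≤ λ( q^{ℓα} + ∑_{0<β<α} L_β L_{α−β} + ∑_{k: α_k>0} q_k^r L_{α−ε_k} ) for |α| > 1, where λ > 1, m = max(ℓ, r), and 1 < q_1 ≤ q_2 ≤ .... Then the normalized quantities L̃_α = 2λ(L_α/q^{mα} + 1) satisfy L̃_α ≤ ∑_{0<β<α} L̃_β L̃_{α−β} for all |α| > 1. -/
open Finsupp

/-- Normalization step: if L satisfies the propagator estimate, then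
    L̃_α = 2λ(L_α/q^{mα} + 1) satisfies the pure Catalan recursion inequality
    L̃_α ≤ ∑_{0<β<α} L̃_β L̃_{α−β} for |α| > 1, where m = max(ℓ, r). -/
theorem stmt19 (q : ℕ → ℝ) (hq1 : 1 < q 0) (hmono : Monotone q)
    (lam ℓ r : ℝ) (hlam : 1 < lam) (hℓ : 0 ≤ ℓ) (hr : 0 ≤ r)
    (L : (ℕ →₀ ℕ) → ℝ) (hL0 : ∀ α : ℕ →₀ ℕ, α ≠ 0 → 0 ≤ L α)
    (hunit : ∀ k : ℕ, L (Finsupp.single k 1) ≤ lam * (q k) ^ (max ℓ r))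
    (hrec : ∀ α : ℕ →₀ ℕ, 1 < (α.sum fun _ n => n) →
      L α ≤ lam * ((∏ k ∈ α.support, (q k) ^ (ℓ * (α k : ℝ))) +
        (∑ β ∈ Finset.Ioo (0 : ℕ →₀ ℕ) α, L β * L (α - β)) +
        ∑ k ∈ α.support, (q k) ^ r * L (α - Finsupp.single k 1))) :
    let Lt : (ℕ →₀ ℕ) → ℝ := fun α =>
      2 * lam * (L α / (∏ k ∈ α.support, (q k) ^ ((max ℓ r) * (α k : ℝ))) + 1)
    ∀ α : ℕ →₀ ℕ, 1 < (α.sum fun _ n => n) →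
      Lt α ≤ ∑ β ∈ Finset.Ioo (0 : ℕ →₀ ℕ) α, Lt β * Lt (α - β) := by
  intro Lt α hα
  have hq0 : ∀ k, 0 < q k := fun k => lt_trans one_pos (lt_of_lt_of_le hq1 (hmono (Nat.zero_le k)))
  have hq1' : ∀ k, 1 ≤ q k := fun k => (lt_of_lt_of_le hq1 (hmono (Nat.zero_le k))).le
  have hlam0 : 0 < lam := lt_trans one_pos hlam
  set m := max ℓ r with hm
  have hℓm : ℓ ≤ m := le_max_left _ _
  have hrm : r ≤ m := le_max_right _ _
  set Q : (ℕ →₀ ℕ) → ℝ := fun β => ∏ k ∈ β.support, (q k) ^ (m * (β k : ℝ)) with hQdef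
  have hQpos : ∀ β, 0 < Q β := fun β => Finset.prod_pos fun k _ => Real.rpow_pos_of_pos (hq0 k) _
  have hQadd : ∀ β γ : ℕ →₀ ℕ, Q (β + γ) = Q β * Q γ := by
    intro β γ
    have hrw : ∀ (f : ℕ →₀ ℕ), Q f = f.prod fun k n => (q k) ^ (m * (n : ℝ)) := fun f => rfl
    rw [hrw, hrw, hrw, Finsupp.prod_add_index']
    · intro k; simp
    · intro k n1 n2; push_cast; rw [mul_add, Real.rpow_add (hq0 k)]
  have hQsplit : ∀ β : ℕ →₀ ℕ, β ≤ α → Q β * Q (α - β) = Q α := by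
    intro β hβ
    rw [← hQadd, add_tsub_cancel_of_le hβ]
  have hQsingle : ∀ k, Q (Finsupp.single k 1) = (q k) ^ m := by
    intro k
    have hrw : ∀ f : ℕ →₀ ℕ, Q f = f.prod fun j n => (q j) ^ (m * (n : ℝ)) := fun f => rfl
    rw [hrw, Finsupp.prod_single_index (by simp)]
    norm_num
  have hαne : α ≠ 0 := by
    rintro rfl; simp at hα
  have hmem : ∀ k ∈ α.support, Finsupp.single k 1 ∈ Finset.Ioo (0 : ℕ →₀ ℕ) α := by
    intro k hk
    rw [Finset.mem_Ioo]
    have hk' : α k ≠ 0 := Finsupp.mem_support_iff.mp hk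
    have hle : Finsupp.single k 1 ≤ α :=
      Finsupp.single_le_iff.mpr (Nat.one_le_iff_ne_zero.mpr hk')
    refine ⟨?_, lt_of_le_of_ne hle ?_⟩
    · refine lt_of_le_of_ne (zero_le) (Ne.symm ?_)
      intro h
      exact one_ne_zero (Finsupp.single_eq_zero.mp h)
    · intro h
      rw [← h, Finsupp.sum_single_index rfl] at hα
      exact absurd hα (lt_irrefl 1)
  have hIoo : ∀ β ∈ Finset.Ioo (0 : ℕ →₀ ℕ) α, β ≠ 0 ∧ α - β ≠ 0 ∧ β ≤ α := by
    intro β hβ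
    rw [Finset.mem_Ioo] at hβ
    refine ⟨hβ.1.ne', ?_, hβ.2.le⟩
    intro h
    exact absurd (tsub_eq_zero_iff_le.mp h) (not_le_of_gt hβ.2)
  set S := ∑ β ∈ Finset.Ioo (0 : ℕ →₀ ℕ) α, L β * L (α - β) with hSdef
  set U := ∑ k ∈ α.support, L (α - Finsupp.single k 1) / Q (α - Finsupp.single k 1) with hUdef
  have hS0 : 0 ≤ S := by
    apply Finset.sum_nonneg
    intro β hβ
    obtain ⟨h1, h2, _⟩ := hIoo β hβ
    exact mul_nonneg (hL0 _ h1) (hL0 _ h2)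
  have hU0 : 0 ≤ U := by
    apply Finset.sum_nonneg
    intro k hk
    exact div_nonneg (hL0 _ (hIoo _ (hmem k hk)).2.1) (hQpos _).le
  -- bound on T / Q α
  have hTU : (∑ k ∈ α.support, (q k) ^ r * L (α - Finsupp.single k 1)) / Q α ≤ U := by
    rw [Finset.sum_div]
    apply Finset.sum_le_sum
    intro k hk
    have hle : Finsupp.single k 1 ≤ α := (Finset.mem_Ioo.mp (hmem k hk)).2.le
    have hne := (hIoo _ (hmem k hk)).2.1
    have hLk : 0 ≤ L (α - Finsupp.single k 1) := hL0 _ hne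
    have hQle : (q k) ^ r * Q (α - Finsupp.single k 1) ≤ Q α := by
      rw [← hQsplit _ hle, hQsingle]
      have : (q k) ^ r ≤ (q k) ^ m := Real.rpow_le_rpow_of_exponent_le (hq1' k) hrm
      exact mul_le_mul_of_nonneg_right this (hQpos _).le
    rw [div_le_div_iff₀ (hQpos α) (hQpos _)]
    calc (q k) ^ r * L (α - Finsupp.single k 1) * Q (α - Finsupp.single k 1)
        = L (α - Finsupp.single k 1) * ((q k) ^ r * Q (α - Finsupp.single k 1)) := by ring
      _ ≤ L (α - Finsupp.single k 1) * Q α := mul_le_mul_of_nonneg_left hQle hLk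
  have hPQ : (∏ k ∈ α.support, (q k) ^ (ℓ * (α k : ℝ))) ≤ Q α := by
    apply Finset.prod_le_prod
    · intro k _; exact (Real.rpow_pos_of_pos (hq0 k) _).le
    · intro k _
      apply Real.rpow_le_rpow_of_exponent_le (hq1' k)
      exact mul_le_mul_of_nonneg_right hℓm (Nat.cast_nonneg _)
  have hP0 : 0 ≤ (∏ k ∈ α.support, (q k) ^ (ℓ * (α k : ℝ))) := by
    apply Finset.prod_nonneg; intro k _; exact (Real.rpow_pos_of_pos (hq0 k) _).le
  -- Step 1: upper bound on Lt α
  have hLt : ∀ β, Lt β = 2 * lam * (L β / Q β + 1) := fun β => rfl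
  set P := ∏ k ∈ α.support, (q k) ^ (ℓ * (α k : ℝ)) with hPdef
  set T := ∑ k ∈ α.support, (q k) ^ r * L (α - Finsupp.single k 1) with hTdef
  have hLtα : 2 * lam * (L α / Q α + 1) ≤ 4 * lam ^ 2 * (S / Q α) + 4 * lam ^ 2 * U + 4 * lam ^ 2 := by
    have h1 := hrec α hα
    have h2 : L α / Q α ≤ lam * ((P + S + T) / Q α) := by
      rw [← mul_div_assoc]
      exact div_le_div_of_nonneg_right h1 (hQpos α).le
    have h3 : 2 * lam * (L α / Q α + 1) ≤ 2 * lam * (lam * ((P + S + T) / Q α) + 1) := by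
      have := mul_le_mul_of_nonneg_left (add_le_add_left h2 1) (by positivity : (0:ℝ) ≤ 2 * lam)
      exact this
    have h4 : 2 * lam * (lam * ((P + S + T) / Q α) + 1)
        = 2 * lam ^ 2 * (P / Q α) + 2 * lam ^ 2 * (S / Q α) + 2 * lam ^ 2 * (T / Q α)
          + 2 * lam := by ring
    have hPdiv : P / Q α ≤ 1 := (div_le_one (hQpos α)).mpr hPQ
    have hSdiv : 0 ≤ S / Q α := div_nonneg hS0 (hQpos α).le
    have hA : 2 * lam ^ 2 * (P / Q α) ≤ 2 * lam ^ 2 * 1 :=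
      mul_le_mul_of_nonneg_left hPdiv (by positivity)
    have hB : 2 * lam ^ 2 * (S / Q α) ≤ 4 * lam ^ 2 * (S / Q α) :=
      mul_le_mul_of_nonneg_right (by nlinarith) hSdiv
    have hC1 : 2 * lam ^ 2 * (T / Q α) ≤ 2 * lam ^ 2 * U :=
      mul_le_mul_of_nonneg_left hTU (by positivity)
    have hC2 : 2 * lam ^ 2 * U ≤ 4 * lam ^ 2 * U :=
      mul_le_mul_of_nonneg_right (by nlinarith) hU0
    have hD : 2 * lam ≤ 2 * lam ^ 2 := by nlinarith
    linarith
  set V := ∑ β ∈ Finset.Ioo (0 : ℕ →₀ ℕ) α, L (α - β) / Q (α - β) with hVdef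
  have hUsum : U ≤ V := by
    have himg : U = ∑ β ∈ α.support.image (fun k => Finsupp.single k 1),
        L (α - β) / Q (α - β) := by
      rw [Finset.sum_image]
      intro x _ y _ h
      exact Finsupp.single_left_injective one_ne_zero h
    rw [himg, hVdef]
    apply Finset.sum_le_sum_of_subset_of_nonneg
    · intro β hβ
      obtain ⟨k, hk, rfl⟩ := Finset.mem_image.mp hβ
      exact hmem k hk
    · intro β hβ _
      exact div_nonneg (hL0 _ (hIoo β hβ).2.1) (hQpos _).le
  have hN : 1 ≤ (Finset.Ioo (0 : ℕ →₀ ℕ) α).card := by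
    obtain ⟨k, hk⟩ := Finsupp.support_nonempty_iff.mpr hαne
    exact Finset.card_pos.mpr ⟨_, hmem k hk⟩
  have hRHS : 4 * lam ^ 2 * (S / Q α) + 4 * lam ^ 2 * U + 4 * lam ^ 2
      ≤ ∑ β ∈ Finset.Ioo (0 : ℕ →₀ ℕ) α,
          (2 * lam * (L β / Q β + 1)) * (2 * lam * (L (α - β) / Q (α - β) + 1)) := by
    have termwise : ∀ β ∈ Finset.Ioo (0 : ℕ →₀ ℕ) α,
        4 * lam ^ 2 * (L β * L (α - β) / Q α) + 4 * lam ^ 2 * (L (α - β) / Q (α - β))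
          + 4 * lam ^ 2
          ≤ (2 * lam * (L β / Q β + 1)) * (2 * lam * (L (α - β) / Q (α - β) + 1)) := by
      intro β hβ
      obtain ⟨hβ0, hαβ0, hβle⟩ := hIoo β hβ
      have hx : 0 ≤ L β / Q β := div_nonneg (hL0 _ hβ0) (hQpos _).le
      have hy : 0 ≤ L (α - β) / Q (α - β) := div_nonneg (hL0 _ hαβ0) (hQpos _).le
      have hxy : L β * L (α - β) / Q α = (L β / Q β) * (L (α - β) / Q (α - β)) := by
        rw [div_mul_div_comm, hQsplit β hβle]
      rw [hxy]
      have hexp : (2 * lam * (L β / Q β + 1)) * (2 * lam * (L (α - β) / Q (α - β) + 1))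
          = 4 * lam ^ 2 * ((L β / Q β) * (L (α - β) / Q (α - β))) + 4 * lam ^ 2 * (L β / Q β)
            + 4 * lam ^ 2 * (L (α - β) / Q (α - β)) + 4 * lam ^ 2 := by ring
      have h4 : 0 ≤ 4 * lam ^ 2 * (L β / Q β) :=
        mul_nonneg (by positivity) hx
      linarith
    have hsum := Finset.sum_le_sum termwise
    have hsplit : ∑ β ∈ Finset.Ioo (0 : ℕ →₀ ℕ) α,
        (4 * lam ^ 2 * (L β * L (α - β) / Q α) + 4 * lam ^ 2 * (L (α - β) / Q (α - β))
          + 4 * lam ^ 2)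
        = 4 * lam ^ 2 * (S / Q α) + 4 * lam ^ 2 * V
          + ((Finset.Ioo (0 : ℕ →₀ ℕ) α).card : ℝ) * (4 * lam ^ 2) := by
      rw [Finset.sum_add_distrib, Finset.sum_add_distrib, Finset.sum_const,
        ← Finset.mul_sum, ← Finset.mul_sum, ← Finset.sum_div, nsmul_eq_mul]
    have hUV : 4 * lam ^ 2 * U ≤ 4 * lam ^ 2 * V :=
      mul_le_mul_of_nonneg_left hUsum (by positivity)
    have hN' : (1 : ℝ) ≤ ((Finset.Ioo (0 : ℕ →₀ ℕ) α).card : ℝ) := by exact_mod_cast hN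
    have hNc : 4 * lam ^ 2 ≤ ((Finset.Ioo (0 : ℕ →₀ ℕ) α).card : ℝ) * (4 * lam ^ 2) :=
      le_mul_of_one_le_left (by positivity) hN'
    calc 4 * lam ^ 2 * (S / Q α) + 4 * lam ^ 2 * U + 4 * lam ^ 2
        ≤ 4 * lam ^ 2 * (S / Q α) + 4 * lam ^ 2 * V
          + ((Finset.Ioo (0 : ℕ →₀ ℕ) α).card : ℝ) * (4 * lam ^ 2) :=
          add_le_add (add_le_add le_rfl hUV) hNc
      _ = ∑ β ∈ Finset.Ioo (0 : ℕ →₀ ℕ) α,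
          (4 * lam ^ 2 * (L β * L (α - β) / Q α) + 4 * lam ^ 2 * (L (α - β) / Q (α - β))
            + 4 * lam ^ 2) := hsplit.symm
      _ ≤ _ := hsum
  calc Lt α = 2 * lam * (L α / Q α + 1) := hLt α
    _ ≤ 4 * lam ^ 2 * (S / Q α) + 4 * lam ^ 2 * U + 4 * lam ^ 2 := hLtα
    _ ≤ ∑ β ∈ Finset.Ioo (0 : ℕ →₀ ℕ) α,
          (2 * lam * (L β / Q β + 1)) * (2 * lam * (L (α - β) / Q (α - β) + 1)) := hRHS
    _ = ∑ β ∈ Finset.Ioo (0 : ℕ →₀ ℕ) α, Lt β * Lt (α - β) :=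
      Finset.sum_congr rfl fun β _ => by rw [hLt, hLt]
end
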